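/- arXiv:2508.20803 — 2 statements merged into one kernel-verified Lean document; each statement's English description precedes it below -/
import Mathlib

section
/- Let 0 < h_1 ≤ h_2 ≤ … ≤ h_n and let r, k be integers with 1 ≤ k < r and k < n, satisfying (r−k+1) h_{n−k+1} ≥ Σ_{i=1}^{n−k+1} h_i and (r−k) h_{n−k} < Σ_{i=1}^{n−k} h_i. Define T = Σ_{i=1}^{n−k} h_i / (r−k). Then h_{n−k} < T ≤ h_{n−k+1}; moreover min(h_j, T) = h_j for j ≤ n−k and min(h_j, T) = T for j > n−k, so that Σ_{j=1}^n min(h_j, T) = r T and max_{1≤i≤n} r·min(h_i,T)/Σ_{j} min(h_j,T) = 1. -/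
/-!
Since `h_{n−k} < T ≤ h_{n−k+1}` and `h` is sorted, truncation at `T` leaves `h_1, …, h_{n−k}`
untouched and cuts the remaining `k` values down to `T`, so
`Σ_j min(h_j, T) = Σ_{i ≤ n−k} h_i + k T = (r − k) T + k T = r T`. Hence
`r · min(h_i, T) / (r T) = min(h_i, T) / T ≤ 1`, with equality at `i = n`.
-/

open Finset

section Truncation

variable {h : ℕ → ℝ} {n m : ℕ} {T : ℝ}

theorem min_eq_self_of_le_index (hmono : MonotoneOn h (Set.Icc 1 n)) (hmn : m ≤ n)
    (hT : h m ≤ T) {j : ℕ} (hj : 1 ≤ j) (hjm : j ≤ m) : min (h j) T = h j :=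
  min_eq_left <| (hmono ⟨hj, hjm.trans hmn⟩ ⟨hj.trans hjm, hmn⟩ hjm).trans hT

theorem min_eq_threshold_of_index_lt (hmono : MonotoneOn h (Set.Icc 1 n))
    (hT : T ≤ h (m + 1)) {j : ℕ} (hmj : m < j) (hjn : j ≤ n) : min (h j) T = T :=
  min_eq_right <| hT.trans (hmono ⟨by omega, by omega⟩ ⟨by omega, hjn⟩ hmj)

theorem sum_Icc_min_eq (hmono : MonotoneOn h (Set.Icc 1 n)) (hmn : m ≤ n)
    (hlo : h m ≤ T) (hhi : T ≤ h (m + 1)) :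
    ∑ j ∈ Icc 1 n, min (h j) T = ∑ j ∈ Icc 1 m, h j + (n - m : ℕ) * T := by
  have hIcc (a : ℕ) : Icc 1 a = Ioc 0 a := Icc_add_one_left_eq_Ioc 0 a
  rw [hIcc n, hIcc m, ← sum_Ioc_consecutive _ m.zero_le hmn]
  congr 1
  · refine sum_congr rfl fun j hj => ?_
    rw [mem_Ioc] at hj
    exact min_eq_self_of_le_index hmono hmn hlo (by omega) hj.2
  · rw [sum_congr rfl fun j hj => min_eq_threshold_of_index_lt hmono hhi (mem_Ioc.1 hj).1
      (mem_Ioc.1 hj).2, sum_const, Nat.card_Ioc, nsmul_eq_mul]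

end Truncation

theorem mul_min_div_mul_le_one {r T : ℝ} (x : ℝ) (hr : 0 < r) (hT : 0 < T) :
    r * min x T / (r * T) ≤ 1 :=
  (div_le_one (by positivity)).2 <| mul_le_mul_of_nonneg_left (min_le_right x T) hr.le

theorem mul_min_div_mul_eq_one {r T x : ℝ} (hr : r ≠ 0) (hT : T ≠ 0) (hx : T ≤ x) :
    r * min x T / (r * T) = 1 := by
  rw [min_eq_right hx, div_self (mul_ne_zero hr hT)]

/-- Existence of the truncation threshold: for sorted positive h_1 ≤ … ≤ h_n
(1-based indexing) and integers 1 ≤ k < r, k < n with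
(r−k+1) h_{n−k+1} ≥ Σ_{i=1}^{n−k+1} h_i and (r−k) h_{n−k} < Σ_{i=1}^{n−k} h_i,
the threshold T = Σ_{i=1}^{n−k} h_i/(r−k) satisfies h_{n−k} < T ≤ h_{n−k+1},
min(h_j,T) = h_j for j ≤ n−k and = T for j > n−k, Σ_j min(h_j,T) = r T, and
max_i r·min(h_i,T)/Σ_j min(h_j,T) = 1. -/
theorem truncation_threshold (n r k : ℕ) (h : ℕ → ℝ)
    (hpos : ∀ i, 1 ≤ i → i ≤ n → 0 < h i)
    (hmono : ∀ i j, 1 ≤ i → i ≤ j → j ≤ n → h i ≤ h j)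
    (hk1 : 1 ≤ k) (hkr : k < r) (hkn : k < n)
    (hup : ((r : ℝ) - k + 1) * h (n - k + 1) ≥ ∑ i ∈ Finset.Icc 1 (n - k + 1), h i)
    (hlow : ((r : ℝ) - k) * h (n - k) < ∑ i ∈ Finset.Icc 1 (n - k), h i) :
    h (n - k) < (∑ i ∈ Finset.Icc 1 (n - k), h i) / ((r : ℝ) - k) ∧
    (∑ i ∈ Finset.Icc 1 (n - k), h i) / ((r : ℝ) - k) ≤ h (n - k + 1) ∧
    (∀ j, 1 ≤ j → j ≤ n - k →
      min (h j) ((∑ i ∈ Finset.Icc 1 (n - k), h i) / ((r : ℝ) - k)) = h j) ∧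
    (∀ j, n - k < j → j ≤ n →
      min (h j) ((∑ i ∈ Finset.Icc 1 (n - k), h i) / ((r : ℝ) - k)) =
        (∑ i ∈ Finset.Icc 1 (n - k), h i) / ((r : ℝ) - k)) ∧
    (∑ j ∈ Finset.Icc 1 n,
        min (h j) ((∑ i ∈ Finset.Icc 1 (n - k), h i) / ((r : ℝ) - k))) =
      (r : ℝ) * ((∑ i ∈ Finset.Icc 1 (n - k), h i) / ((r : ℝ) - k)) ∧
    (∀ i ∈ Finset.Icc 1 n,
      (r : ℝ) * min (h i) ((∑ i ∈ Finset.Icc 1 (n - k), h i) / ((r : ℝ) - k)) /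
        (∑ j ∈ Finset.Icc 1 n,
          min (h j) ((∑ i ∈ Finset.Icc 1 (n - k), h i) / ((r : ℝ) - k))) ≤ 1) ∧
    (∃ i ∈ Finset.Icc 1 n,
      (r : ℝ) * min (h i) ((∑ i ∈ Finset.Icc 1 (n - k), h i) / ((r : ℝ) - k)) /
        (∑ j ∈ Finset.Icc 1 n,
          min (h j) ((∑ i ∈ Finset.Icc 1 (n - k), h i) / ((r : ℝ) - k))) = 1) := by
  have hmonoOn : MonotoneOn h (Set.Icc 1 n) := fun i hi j hj hij => hmono i j hi.1 hij hj.2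
  have hrk : (0 : ℝ) < r - k := sub_pos.2 (by exact_mod_cast hkr)
  have hr : (0 : ℝ) < r := by exact_mod_cast k.zero_le.trans_lt hkr
  set m := n - k
  set T := (∑ i ∈ Icc 1 m, h i) / ((r : ℝ) - k)
  have hST : ∑ i ∈ Icc 1 m, h i = (r - k) * T := (mul_div_cancel₀ _ hrk.ne').symm
  have hlt : h m < T := (lt_div_iff₀' hrk).2 hlow
  have hle : T ≤ h (m + 1) := by
    rw [sum_Icc_succ_top (by omega)] at hup
    exact (div_le_iff₀' hrk).2 (by linarith)
  have hTpos : 0 < T := (hpos m (by omega) (by omega)).trans hlt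
  have hsum : ∑ j ∈ Icc 1 n, min (h j) T = r * T := by
    rw [sum_Icc_min_eq hmonoOn (by omega) hlt.le hle, hST, show n - m = k by omega]
    ring
  refine ⟨hlt, hle, fun j => min_eq_self_of_le_index hmonoOn (by omega) hlt.le,
    fun j => min_eq_threshold_of_index_lt hmonoOn hle, hsum, fun i _ => ?_, n, ?_, ?_⟩
  · rw [hsum]
    exact mul_min_div_mul_le_one _ hr hTpos
  · exact mem_Icc.2 ⟨by omega, le_rfl⟩
  · rw [hsum]
    exact mul_min_div_mul_eq_one hr.ne' hTpos.ne'
      (hle.trans (hmonoOn ⟨by omega, by omega⟩ ⟨by omega, le_rfl⟩ (by omega)))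
end

section
/- Let 0 < h_1 ≤ … ≤ h_n and let r, k be integers with 0 ≤ k < r ≤ n and k < n such that (when k ≥ 1) (r−k+1) h_{n−k+1} ≥ Σ_{i=1}^{n−k+1} h_i, and (r−k) h_{n−k} < Σ_{i=1}^{n−k} h_i. Then for every (π_1,…,π_n) with 0 < π_i ≤ 1 and Σ_i π_i = r, one has Σ_{i=1}^n h_i^2/π_i ≥ Σ_{i=n−k+1}^n h_i^2 + (Σ_{i=1}^{n−k} h_i)^2/(r−k). -/
/-!
Lagrangian duality with multiplier `T² = (Σ_{i ≤ n-k} h_i / (r-k))²` for the constraint `Σ π_i = r`.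
Pointwise, `h²/π + T² π ≥ 2 T h` by AM-GM, and `h²/π + T² π ≥ h² + T²` whenever `0 ≤ T ≤ h` and
`π ≤ 1`, since `p ↦ h²/p + T² p` decreases on `(0, 1]` then. Use the first bound on the `n - k`
smallest `h`'s and the second on the `k` largest ones, which are at least `T` by the hypothesis on
`h_{n-k+1}`; summing and substituting `Σ π_i = r` leaves exactly the claimed bound.
-/

open Finset

lemma two_mul_mul_le_sq_div_add_sq_mul {a p : ℝ} (T : ℝ) (hp : 0 < p) :
    2 * T * a ≤ a ^ 2 / p + T ^ 2 * p := by
  rw [div_add' _ _ _ hp.ne', le_div_iff₀ hp]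
  nlinarith [sq_nonneg (a - T * p)]

lemma sq_add_sq_le_sq_div_add_sq_mul {a p T : ℝ} (hp : 0 < p) (hp1 : p ≤ 1) (hT : 0 ≤ T)
    (hTa : T ≤ a) : a ^ 2 + T ^ 2 ≤ a ^ 2 / p + T ^ 2 * p := by
  rw [div_add' _ _ _ hp.ne', le_div_iff₀ hp]
  have hTpa : T ^ 2 * p ≤ a ^ 2 := by nlinarith
  nlinarith [mul_nonneg (sub_nonneg.mpr hp1) (sub_nonneg.mpr hTpa)]

lemma sum_sq_add_sq_div_le_sum_sq_div {ι : Type*} [DecidableEq ι] {s t : Finset ι}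
    (hst : Disjoint s t) {a p : ι → ℝ} {c : ℝ} (hc : 0 < c) (hs : ∀ i ∈ s, 0 < p i)
    (ht : ∀ i ∈ t, 0 < p i ∧ p i ≤ 1) (hsum : ∑ i ∈ s ∪ t, p i = c + #t)
    (ha : 0 ≤ ∑ i ∈ s, a i) (htail : ∀ i ∈ t, (∑ i ∈ s, a i) / c ≤ a i) :
    ∑ i ∈ t, a i ^ 2 + (∑ i ∈ s, a i) ^ 2 / c ≤ ∑ i ∈ s ∪ t, a i ^ 2 / p i := by
  set S := ∑ i ∈ s, a i
  set T := S / c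
  have hhead : ∑ i ∈ s, 2 * T * a i ≤ ∑ i ∈ s, (a i ^ 2 / p i + T ^ 2 * p i) :=
    sum_le_sum fun i hi => two_mul_mul_le_sq_div_add_sq_mul T (hs i hi)
  have hlast : ∑ i ∈ t, (a i ^ 2 + T ^ 2) ≤ ∑ i ∈ t, (a i ^ 2 / p i + T ^ 2 * p i) :=
    sum_le_sum fun i hi =>
      sq_add_sq_le_sq_div_add_sq_mul (ht i hi).1 (ht i hi).2 (div_nonneg ha hc.le) (htail i hi)
  have hdual : 2 * T * S + ∑ i ∈ t, a i ^ 2 + #t * T ^ 2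
      ≤ ∑ i ∈ s ∪ t, a i ^ 2 / p i + T ^ 2 * (c + #t) := by
    rw [← hsum, sum_union hst, sum_union hst]
    simp only [← mul_sum, sum_add_distrib, sum_const, nsmul_eq_mul] at hhead hlast
    linarith
  have hT : 2 * T * S - c * T ^ 2 = S ^ 2 / c := by
    simp only [T]
    field_simp
    ring
  linarith

theorem objective_sharp_lower_bound_general (n r k : ℕ) (h : ℕ → ℝ)
    (hpos : ∀ i, 1 ≤ i → i ≤ n → 0 < h i)
    (hmono : ∀ i j, 1 ≤ i → i ≤ j → j ≤ n → h i ≤ h j)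
    (hkr : k < r) (hkn : k < n)
    (hup : 1 ≤ k →
      ((r : ℝ) - k + 1) * h (n - k + 1) ≥ ∑ i ∈ Finset.Icc 1 (n - k + 1), h i) :
    ∀ π : ℕ → ℝ, (∀ i ∈ Finset.Icc 1 n, 0 < π i ∧ π i ≤ 1) →
      (∑ i ∈ Finset.Icc 1 n, π i) = (r : ℝ) →
      (∑ i ∈ Finset.Icc (n - k + 1) n, (h i) ^ 2) +
          (∑ i ∈ Finset.Icc 1 (n - k), h i) ^ 2 / ((r : ℝ) - k) ≤
        ∑ i ∈ Finset.Icc 1 n, (h i) ^ 2 / π i := by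
  intro π hπ hsum
  set m := n - k
  have hsplit : Icc 1 n = Icc 1 m ∪ Icc (m + 1) n := by
    ext i; simp only [mem_Icc, mem_union]; omega
  have hdisj : Disjoint (Icc 1 m) (Icc (m + 1) n) :=
    disjoint_left.mpr fun i hi hi' => by simp only [mem_Icc] at hi hi'; omega
  have hcard : #(Icc (m + 1) n) = k := by simp only [Nat.card_Icc]; omega
  have hrk : (0 : ℝ) < r - k := sub_pos.mpr (by exact_mod_cast hkr)
  have htail : ∀ i ∈ Icc (m + 1) n, (∑ j ∈ Icc 1 m, h j) / (r - k) ≤ h i := by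
    intro i hi
    obtain ⟨hmi, hin⟩ := mem_Icc.mp hi
    have hup' := hup (by omega)
    rw [sum_Icc_succ_top (by omega)] at hup'
    calc (∑ j ∈ Icc 1 m, h j) / (r - k) ≤ h (m + 1) := by rw [div_le_iff₀ hrk]; linarith
      _ ≤ h i := hmono _ _ (by omega) hmi hin
  rw [hsplit] at hπ hsum ⊢
  refine sum_sq_add_sq_div_le_sum_sq_div hdisj hrk (fun i hi => (hπ i (mem_union_left _ hi)).1)
    (fun i hi => hπ i (mem_union_right _ hi)) (by rw [hsum, hcard]; ring)
    (sum_nonneg fun i hi => ?_) htail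
  obtain ⟨h1i, him⟩ := mem_Icc.mp hi
  exact (hpos i h1i (by omega)).le

/-- Sharp lower bound for the subsampling objective over the feasible set: for sorted
positive h_1 ≤ … ≤ h_n (1-based indexing) and integers 0 ≤ k < r ≤ n, k < n with
(when k ≥ 1) (r−k+1) h_{n−k+1} ≥ Σ_{i=1}^{n−k+1} h_i, and
(r−k) h_{n−k} < Σ_{i=1}^{n−k} h_i, every feasible vector (0 < π_i ≤ 1, Σ π_i = r)
satisfies Σ h_i²/π_i ≥ Σ_{i=n−k+1}^n h_i² + (Σ_{i=1}^{n−k} h_i)²/(r−k). -/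
theorem objective_sharp_lower_bound (n r k : ℕ) (h : ℕ → ℝ)
    (hpos : ∀ i, 1 ≤ i → i ≤ n → 0 < h i)
    (hmono : ∀ i j, 1 ≤ i → i ≤ j → j ≤ n → h i ≤ h j)
    (hkr : k < r) (hrn : r ≤ n) (hkn : k < n)
    (hup : 1 ≤ k →
      ((r : ℝ) - k + 1) * h (n - k + 1) ≥ ∑ i ∈ Finset.Icc 1 (n - k + 1), h i)
    (hlow : ((r : ℝ) - k) * h (n - k) < ∑ i ∈ Finset.Icc 1 (n - k), h i) :
    ∀ π : ℕ → ℝ, (∀ i ∈ Finset.Icc 1 n, 0 < π i ∧ π i ≤ 1) →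
      (∑ i ∈ Finset.Icc 1 n, π i) = (r : ℝ) →
      (∑ i ∈ Finset.Icc (n - k + 1) n, (h i) ^ 2) +
          (∑ i ∈ Finset.Icc 1 (n - k), h i) ^ 2 / ((r : ℝ) - k) ≤
        ∑ i ∈ Finset.Icc 1 n, (h i) ^ 2 / π i :=
  objective_sharp_lower_bound_general n r k h hpos hmono hkr hkn hup
end
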